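/- arXiv:1006.4408 — 5 statements merged into one kernel-verified Lean document; each statement's English description precedes it below -/
import Mathlib

section
/- Fix an integer M ≥ 1 and a real R > 0. If λ* > 0 maximizes S(M,·) over (0,∞), i.e. S(M,λ*) ≥ S(M,λ) for all λ > 0, then Σ_{k=0}^{M−1} (λ*)^k/k! = (λ*)^M/(M−1)! (equivalently, Pr{X ≤ M−1} = M·Pr{X = M} for X Poisson with mean λ*). -/
open Finset Real

/-- Asymptotic throughput of slotted ALOHA with MPR capability `M` at Poisson
attempt rate `λ`: `S(M,λ) = R · λ · ∑_{k=0}^{M−1} (λ^k/k!) e^{−λ}`. -/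
noncomputable def S (M : ℕ) (R lam : ℝ) : ℝ :=
  R * lam * ∑ k ∈ Finset.range M, lam ^ k / (Nat.factorial k : ℝ) * Real.exp (-lam)

/-!
Write `S(M,λ) = R · λe^{−λ} · P(λ)` with `P(λ) = ∑_{k<M} λ^k/k!`. Differentiating `P` drops its
top term, `P' = P − λ^{M−1}/(M−1)!`, so `(λe^{−λ})' P + λe^{−λ} P' = e^{−λ}(P(λ) − λ^M/(M−1)!)`.
A maximum on the open half-line is a critical point, and `R e^{−λ} ≠ 0`.
-/

open scoped Nat

theorem hasDerivAt_sum_range_pow_div_factorial (n : ℕ) (x : ℝ) :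
    HasDerivAt (fun y : ℝ => ∑ k ∈ range (n + 1), y ^ k / (k ! : ℝ))
      (∑ k ∈ range n, x ^ k / (k ! : ℝ)) x := by
  induction n with
  | zero => simpa using hasDerivAt_const x (1 : ℝ)
  | succ n ih =>
    have h := ih.fun_add ((hasDerivAt_pow (n + 1) x).div_const ((n + 1)! : ℝ))
    simp only [← sum_range_succ] at h
    refine h.congr_deriv ?_
    rw [sum_range_succ, Nat.factorial_succ]
    push_cast
    field_simp

theorem S_eq_mul_sum (M : ℕ) (R x : ℝ) :
    S M R x = R * (x * exp (-x)) * ∑ k ∈ range M, x ^ k / (k ! : ℝ) := by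
  rw [S, ← sum_mul]
  ring

theorem hasDerivAt_S (N : ℕ) (R x : ℝ) :
    HasDerivAt (S (N + 1) R)
      (R * exp (-x) * (∑ k ∈ range (N + 1), x ^ k / (k ! : ℝ) - x ^ (N + 1) / (N ! : ℝ))) x := by
  have hxe : HasDerivAt (fun y => y * exp (-y)) ((1 - x) * exp (-x)) x :=
    ((hasDerivAt_id x).fun_mul (hasDerivAt_neg x).exp).congr_deriv (by simp only [id]; ring)
  rw [show S (N + 1) R = _ from funext (S_eq_mul_sum (N + 1) R)]
  refine ((hxe.const_mul R).fun_mul (hasDerivAt_sum_range_pow_div_factorial N x)).congr_deriv ?_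
  rw [sum_range_succ _ N]
  ring

/-- if `λ* > 0` maximizes `S(M,·)` over `(0,∞)`, then the first-order
condition `∑_{k=0}^{M−1} (λ*)^k/k! = (λ*)^M/(M−1)!` holds. -/
theorem stmt1 (M : ℕ) (hM : 1 ≤ M) (R : ℝ) (hR : 0 < R) (lamStar : ℝ)
    (hpos : 0 < lamStar) (hmax : ∀ lam : ℝ, 0 < lam → S M R lam ≤ S M R lamStar) :
    ∑ k ∈ Finset.range M, lamStar ^ k / (Nat.factorial k : ℝ) =
      lamStar ^ M / (Nat.factorial (M - 1) : ℝ) := by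
  obtain ⟨N, rfl⟩ : ∃ N, M = N + 1 := ⟨M - 1, by omega⟩
  have hloc : IsLocalMax (S (N + 1) R) lamStar :=
    Filter.mem_of_superset (Ioi_mem_nhds hpos) hmax
  have hcrit := (hasDerivAt_S N R lamStar).deriv.symm.trans hloc.deriv_eq_zero
  rw [mul_eq_zero_iff_left (by positivity), sub_eq_zero] at hcrit
  simpa using hcrit
end

section
/- (Lemma 2, second part) Let R > 0 and for each integer M ≥ 1 let λ*(M) > 0 be any maximizer of S(M,·) over (0,∞) (i.e. S(M,λ*(M)) ≥ S(M,λ) for all λ > 0). Then lim_{M→∞} λ*(M)/M = 1. -/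
open Finset Real Filter

/-! Write `q(a) = a e^{1-a}`, which is `< 1` for `a ≠ 1`. Always `S(M,λ) ≤ Rλ`, while
Chernoff bounds for the Poisson tails give `S(M,aM) ≥ RaM(1 - q(a)^M)` for `a ≤ 1` and
`S(M,λ) ≤ RM q(b)^M` for `λ ≥ bM`, `b ≥ 1`. Comparing with the maximal value `S(M,λ*(M))`,
which is at least `S(M,aM)` and at least `S(M,M/2) ≥ RM/4`, forces `aM < λ*(M) < bM` for
large `M` whenever `a < 1 < b`. -/

open scoped Nat

namespace Real

lemma hasSum_pow_div_factorial (x : ℝ) : HasSum (fun n ↦ x ^ n / n !) (exp x) := by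
  rw [exp_eq_exp_ℝ]
  exact NormedSpace.expSeries_div_hasSum_exp x

-- Chernoff's trick, for both tails: the weight `t ^ k / t ^ n` is `≥ 1` on the summed range,
-- and the weighted exponential series sums to `exp (t * x) / t ^ n`.
lemma sum_range_succ_pow_div_factorial_le {x t : ℝ} (hx : 0 ≤ x) (ht₀ : 0 < t)
    (ht₁ : t ≤ 1) (n : ℕ) : ∑ k ∈ range (n + 1), x ^ k / k ! ≤ exp (t * x) / t ^ n := by
  calc ∑ k ∈ range (n + 1), x ^ k / k !
      ≤ ∑ k ∈ range (n + 1), (t * x) ^ k / k ! / t ^ n := by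
        refine sum_le_sum fun k hk ↦ ?_
        have htk : 1 ≤ t ^ k / t ^ n := (one_le_div (by positivity)).2
          (pow_le_pow_of_le_one ht₀.le ht₁ (mem_range_succ_iff.1 hk))
        calc x ^ k / k ! ≤ x ^ k / k ! * (t ^ k / t ^ n) :=
              le_mul_of_one_le_right (by positivity) htk
          _ = (t * x) ^ k / k ! / t ^ n := by ring
      _ = (∑ k ∈ range (n + 1), (t * x) ^ k / k !) / t ^ n := (sum_div ..).symm
      _ ≤ exp (t * x) / t ^ n := by gcongr; exact sum_le_exp_of_nonneg (by positivity) _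

lemma exp_sub_sum_range_pow_div_factorial_le {x t : ℝ} (hx : 0 ≤ x) (ht : 1 ≤ t) (n : ℕ) :
    exp x - ∑ k ∈ range n, x ^ k / k ! ≤ exp (t * x) / t ^ n := by
  have ht₀ : 0 < t := by linarith
  have htail : exp x - ∑ k ∈ range n, x ^ k / k ! = ∑' k, x ^ (k + n) / (k + n)! := by
    rw [← (hasSum_pow_div_factorial x).tsum_eq,
      ← (hasSum_pow_div_factorial x).summable.sum_add_tsum_nat_add n, add_sub_cancel_left]
  rw [htail, ← ((hasSum_pow_div_factorial (t * x)).div_const (t ^ n)).tsum_eq]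
  refine Summable.tsum_le_tsum_of_inj (· + n) (add_left_injective n) (fun _ _ ↦ by positivity)
    (fun k ↦ ?_) ((summable_nat_add_iff n).2 (hasSum_pow_div_factorial x).summable)
    ((hasSum_pow_div_factorial (t * x)).summable.div_const _)
  have htk : 1 ≤ t ^ (k + n) / t ^ n :=
    (one_le_div (by positivity)).2 (pow_le_pow_right₀ ht (Nat.le_add_left n k))
  calc x ^ (k + n) / (k + n)! ≤ x ^ (k + n) / (k + n)! * (t ^ (k + n) / t ^ n) :=
        le_mul_of_one_le_right (by positivity) htk
    _ = (t * x) ^ (k + n) / (k + n)! / t ^ n := by ring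

end Real

-- `poissonCDF lam n` is `P(X < n)`, not `P(X ≤ n)`, for `X ~ Poisson(lam)`.
noncomputable def poissonCDF (lam : ℝ) (n : ℕ) : ℝ :=
  exp (-lam) * ∑ k ∈ range n, lam ^ k / k !

noncomputable def poissonChernoffBase (a : ℝ) : ℝ :=
  a * exp (1 - a)

lemma poissonChernoffBase_nonneg {a : ℝ} (ha : 0 ≤ a) : 0 ≤ poissonChernoffBase a := by
  unfold poissonChernoffBase; positivity

lemma poissonChernoffBase_lt_one {a : ℝ} (ha : a ≠ 1) : poissonChernoffBase a < 1 := by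
  have h := add_one_lt_exp (sub_ne_zero.2 ha)
  calc poissonChernoffBase a = a * exp (1 - a) := rfl
    _ < exp (a - 1) * exp (1 - a) := by gcongr; linarith
    _ = 1 := by rw [← exp_add]; simp

lemma tendsto_poissonChernoffBase_pow {a : ℝ} (ha : 0 ≤ a) (ha₁ : a ≠ 1) :
    Tendsto (fun n : ℕ ↦ poissonChernoffBase a ^ n) atTop (nhds 0) :=
  tendsto_pow_atTop_nhds_zero_of_lt_one (poissonChernoffBase_nonneg ha)
    (poissonChernoffBase_lt_one ha₁)

lemma poissonCDF_le_one {lam : ℝ} (hlam : 0 ≤ lam) (n : ℕ) : poissonCDF lam n ≤ 1 := by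
  calc poissonCDF lam n ≤ exp (-lam) * exp lam := by
        unfold poissonCDF; gcongr; exact sum_le_exp_of_nonneg hlam n
    _ = 1 := by rw [← exp_add]; simp

lemma one_sub_poissonChernoffBase_pow_le_poissonCDF {a : ℝ} (ha₀ : 0 < a) (ha₁ : a ≤ 1)
    (n : ℕ) : 1 - poissonChernoffBase a ^ n ≤ poissonCDF (a * n) n := by
  have htail := exp_sub_sum_range_pow_div_factorial_le (x := a * n) (by positivity)
    (one_le_inv_iff₀.2 ⟨ha₀, ha₁⟩) n
  have h := mul_le_mul_of_nonneg_left htail (exp_pos (-(a * n))).le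
  have hq : exp (-(a * n)) * (exp (a⁻¹ * (a * n)) / a⁻¹ ^ n) = poissonChernoffBase a ^ n := by
    rw [poissonChernoffBase, mul_pow, ← exp_nat_mul, inv_pow, div_inv_eq_mul,
      inv_mul_cancel_left₀ ha₀.ne', mul_comm (a ^ n), ← mul_assoc, ← exp_add]
    ring_nf
  rw [mul_sub, ← exp_add, neg_add_cancel, exp_zero, hq] at h
  unfold poissonCDF
  linarith

lemma poissonCDF_succ_le_poissonChernoffBase_pow {b lam : ℝ} {n : ℕ} (hb : 1 ≤ b)
    (hlam : b * n ≤ lam) : poissonCDF lam (n + 1) ≤ poissonChernoffBase b ^ n := by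
  have hb₀ : 0 < b := by linarith
  calc poissonCDF lam (n + 1) ≤ exp (-lam) * (exp (b⁻¹ * lam) / b⁻¹ ^ n) := by
        unfold poissonCDF
        gcongr
        exact sum_range_succ_pow_div_factorial_le ((by positivity : (0 : ℝ) ≤ b * n).trans hlam)
          (inv_pos.2 hb₀) (inv_le_one_of_one_le₀ hb) n
    _ = b ^ n * exp (-((1 - b⁻¹) * lam)) := by
        rw [inv_pow, div_inv_eq_mul, mul_comm _ (b ^ n), mul_left_comm, ← exp_add]; ring_nf
    _ ≤ b ^ n * exp (-((1 - b⁻¹) * (b * n))) := by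
        gcongr; exact sub_nonneg.2 (inv_le_one_of_one_le₀ hb)
    _ = poissonChernoffBase b ^ n := by
        rw [poissonChernoffBase, mul_pow, ← exp_nat_mul]; field_simp; ring_nf

lemma S_eq_mul_poissonCDF (M : ℕ) (R lam : ℝ) : S M R lam = R * lam * poissonCDF lam M := by
  rw [S, poissonCDF, ← sum_mul, mul_comm (exp _)]

lemma S_le_mul {M : ℕ} {R lam : ℝ} (hR : 0 ≤ R) (hlam : 0 ≤ lam) :
    S M R lam ≤ R * lam := by
  rw [S_eq_mul_poissonCDF]
  exact mul_le_of_le_one_right (by positivity) (poissonCDF_le_one hlam M)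

-- `lam * P(X < M) = E[X; X ≤ M] ≤ M * P(X ≤ M)`.
lemma S_le_mul_poissonCDF_succ {M : ℕ} {R lam : ℝ} (hR : 0 ≤ R) (hlam : 0 ≤ lam) :
    S M R lam ≤ R * M * poissonCDF lam (M + 1) := by
  calc S M R lam
        = R * exp (-lam) * ∑ k ∈ range M, (k + 1 : ℝ) * (lam ^ (k + 1) / (k + 1)!) := by
        rw [S, mul_sum, mul_sum]
        refine sum_congr rfl fun k _ ↦ ?_
        rw [Nat.factorial_succ]; push_cast; field_simp; ring
    _ ≤ R * exp (-lam) * ∑ k ∈ range M, (M : ℝ) * (lam ^ (k + 1) / (k + 1)!) := by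
        gcongr with k hk
        exact_mod_cast mem_range.1 hk
    _ = R * M * (exp (-lam) * ∑ k ∈ range M, lam ^ (k + 1) / (k + 1)!) := by
        rw [← mul_sum]; ring
    _ ≤ R * M * poissonCDF lam (M + 1) := by
        rw [poissonCDF, sum_range_succ' _ M]
        gcongr
        simp

lemma mul_one_sub_poissonChernoffBase_pow_le_S (M : ℕ) {R a : ℝ} (hR : 0 ≤ R) (ha₀ : 0 < a)
    (ha₁ : a ≤ 1) : R * (a * M) * (1 - poissonChernoffBase a ^ M) ≤ S M R (a * M) := by
  rw [S_eq_mul_poissonCDF]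
  gcongr
  exact one_sub_poissonChernoffBase_pow_le_poissonCDF ha₀ ha₁ M

lemma S_le_mul_poissonChernoffBase_pow {M : ℕ} {R b lam : ℝ} (hR : 0 ≤ R) (hb : 1 ≤ b)
    (hlam : b * M ≤ lam) : S M R lam ≤ R * M * poissonChernoffBase b ^ M := by
  have hlam₀ : 0 ≤ lam := le_trans (by positivity) hlam
  calc S M R lam ≤ R * M * poissonCDF lam (M + 1) := S_le_mul_poissonCDF_succ hR hlam₀
    _ ≤ R * M * poissonChernoffBase b ^ M := by
        gcongr; exact poissonCDF_succ_le_poissonChernoffBase_pow hb hlam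

section Maximizer

variable {R : ℝ} {lamStar : ℕ → ℝ}

lemma eventually_mul_lt_maximizer (hR : 0 < R) (hpos : ∀ M : ℕ, 1 ≤ M → 0 < lamStar M)
    (hmax : ∀ M : ℕ, 1 ≤ M → ∀ lam : ℝ, 0 < lam → S M R lam ≤ S M R (lamStar M))
    {a : ℝ} (ha : a < 1) : ∀ᶠ M : ℕ in atTop, a * M < lamStar M := by
  obtain ⟨c, hc, hc₁⟩ := exists_between (max_lt ha one_pos)
  have hc₀ : 0 < c := (le_max_right a 0).trans_lt hc
  have hac : a / c < 1 := (div_lt_one hc₀).2 ((le_max_left a 0).trans_lt hc)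
  have hq : ∀ᶠ M : ℕ in atTop, poissonChernoffBase c ^ M < 1 - a / c :=
    (tendsto_poissonChernoffBase_pow hc₀.le hc₁.ne).eventually (gt_mem_nhds (by linarith))
  filter_upwards [eventually_ge_atTop 1, hq] with M hM hqM
  have hS : R * (c * M * (1 - poissonChernoffBase c ^ M)) ≤ R * lamStar M := calc
    _ = R * (c * M) * (1 - poissonChernoffBase c ^ M) := by ring
    _ ≤ S M R (c * M) := mul_one_sub_poissonChernoffBase_pow_le_S M hR.le hc₀ hc₁.le
    _ ≤ S M R (lamStar M) := hmax M hM _ (by positivity)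
    _ ≤ R * lamStar M := S_le_mul hR.le (hpos M hM).le
  calc a * M = c * M * (a / c) := by field_simp
    _ < c * M * (1 - poissonChernoffBase c ^ M) := by gcongr; linarith
    _ ≤ lamStar M := le_of_mul_le_mul_left hS hR

lemma eventually_maximizer_lt_mul (hR : 0 < R)
    (hmax : ∀ M : ℕ, 1 ≤ M → ∀ lam : ℝ, 0 < lam → S M R lam ≤ S M R (lamStar M))
    {b : ℝ} (hb : 1 < b) : ∀ᶠ M : ℕ in atTop, lamStar M < b * M := by
  have hhalf : ∀ᶠ M : ℕ in atTop, poissonChernoffBase (1 / 2) ^ M < 1 / 2 :=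
    (tendsto_poissonChernoffBase_pow (by norm_num) (by norm_num)).eventually
      (gt_mem_nhds (by norm_num))
  have hquarter : ∀ᶠ M : ℕ in atTop, poissonChernoffBase b ^ M < 1 / 4 :=
    (tendsto_poissonChernoffBase_pow (by linarith) hb.ne').eventually (gt_mem_nhds (by norm_num))
  filter_upwards [eventually_ge_atTop 1, hhalf, hquarter] with M hM hhalfM hquarterM
  by_contra! h
  refine lt_irrefl (R * M * poissonChernoffBase b ^ M) ?_
  calc R * M * poissonChernoffBase b ^ M
      < R * M * (1 / 2 * (1 - poissonChernoffBase (1 / 2) ^ M)) := by gcongr; linarith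
    _ = R * (1 / 2 * M) * (1 - poissonChernoffBase (1 / 2) ^ M) := by ring
    _ ≤ S M R (1 / 2 * M) :=
        mul_one_sub_poissonChernoffBase_pow_le_S M hR.le (by norm_num) (by norm_num)
    _ ≤ S M R (lamStar M) := hmax M hM _ (by positivity)
    _ ≤ R * M * poissonChernoffBase b ^ M := S_le_mul_poissonChernoffBase_pow hR.le hb.le h

end Maximizer

/-- Lemma 2, second part: if `λ*(M) > 0` maximizes `S(M,·)` over
`(0,∞)` for each `M ≥ 1`, then `λ*(M)/M → 1` as `M → ∞`. -/
theorem stmt11 (R : ℝ) (hR : 0 < R) (lamStar : ℕ → ℝ)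
    (hpos : ∀ M : ℕ, 1 ≤ M → 0 < lamStar M)
    (hmax : ∀ M : ℕ, 1 ≤ M → ∀ lam : ℝ, 0 < lam → S M R lam ≤ S M R (lamStar M)) :
    Filter.Tendsto (fun M : ℕ => lamStar M / (M : ℝ)) Filter.atTop (nhds 1) := by
  refine tendsto_order.2 ⟨fun a ha ↦ ?_, fun b hb ↦ ?_⟩
  · filter_upwards [eventually_mul_lt_maximizer hR hpos hmax ha, eventually_gt_atTop 0]
      with M hlt hM
    exact (lt_div_iff₀ (by exact_mod_cast hM)).2 hlt
  · filter_upwards [eventually_maximizer_lt_mul hR hmax hb, eventually_gt_atTop 0] with M hlt hM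
    exact (div_lt_iff₀ (by exact_mod_cast hM)).2 hlt
end

section
/- (Asymptotic channel-access efficiency, Theorem 2) For every fixed real R > 0, lim_{M→∞} S*(M)/(M·R) = 1, where S*(M) = sup_{λ>0} S(M,λ). -/
/-!
For a Poisson variable `N` of rate `λ = c M` with `c < 1`, the Chernoff bound
`P(N ≥ M) ≤ t^{-M} e^{λ(t-1)}` at `t = 1/c` gives `P(N ≥ M) ≤ (c e^{1-c})^M → 0`, hence
`S*(M) ≥ R c M (1 - (c e^{1-c})^M)`. Conversely `λ P(N < M) = ∑_{k<M} (k+1) P(N = k+1) ≤ M`,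
so `S*(M) ≤ R M`. Letting `M → ∞` and then `c → 1` gives the limit.
-/

open Finset Real Filter

/-- Maximum achievable asymptotic throughput `S*(M) = sup_{λ>0} S(M,λ)`. -/
noncomputable def Sstar (M : ℕ) (R : ℝ) : ℝ :=
  sSup ((fun lam => S M R lam) '' Set.Ioi (0 : ℝ))

open scoped Nat

lemma S_eq_mul_sum_mul_exp (M : ℕ) (R lam : ℝ) :
    S M R lam = R * lam * (∑ k ∈ range M, lam ^ k / k !) * exp (-lam) := by
  rw [S, ← Finset.sum_mul]
  ring

lemma mul_sum_range_pow_div_factorial_le_mul_exp (M : ℕ) {x : ℝ} (hx : 0 ≤ x) :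
    x * ∑ k ∈ range M, x ^ k / k ! ≤ M * exp x :=
  calc x * ∑ k ∈ range M, x ^ k / k !
      = ∑ k ∈ range M, ((k : ℝ) + 1) * (x ^ (k + 1) / (k + 1)!) := by
        rw [Finset.mul_sum]
        refine Finset.sum_congr rfl fun k _ => ?_
        push_cast [Nat.factorial_succ]
        field_simp
        ring
    _ ≤ ∑ k ∈ range M, (M : ℝ) * (x ^ (k + 1) / (k + 1)!) := by
        gcongr with k hk
        exact_mod_cast Finset.mem_range.mp hk
    _ ≤ M * ∑ k ∈ range (M + 1), x ^ k / k ! := by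
        rw [← Finset.mul_sum, Finset.sum_range_succ' _ M]
        gcongr
        simp
    _ ≤ M * exp x := by gcongr; exact sum_le_exp_of_nonneg hx _

lemma pow_mul_exp_sub_sum_range_le (M : ℕ) {x t : ℝ} (hx : 0 ≤ x) (ht : 1 ≤ t) :
    t ^ M * (exp x - ∑ k ∈ range M, x ^ k / k !) ≤ exp (x * t) := by
  have tail (y : ℝ) : HasSum (fun i => y ^ (i + M) / (i + M)!)
      (exp y - ∑ k ∈ range M, y ^ k / k !) := by
    refine (hasSum_nat_add_iff' (f := fun n => y ^ n / n !) M).mpr ?_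
    rw [exp_eq_exp_ℝ]
    exact NormedSpace.expSeries_div_hasSum_exp y
  have hle : t ^ M * (exp x - ∑ k ∈ range M, x ^ k / k !)
      ≤ exp (x * t) - ∑ k ∈ range M, (x * t) ^ k / k ! := by
    refine hasSum_le (fun i => ?_) ((tail x).mul_left (t ^ M)) (tail (x * t))
    rw [mul_pow, pow_add t, ← mul_div_assoc, mul_comm (x ^ _)]
    gcongr
    exact le_mul_of_one_le_left (by positivity) (one_le_pow₀ ht)
  have : 0 ≤ ∑ k ∈ range M, (x * t) ^ k / k ! := by positivity
  linarith

lemma mul_exp_one_sub_lt_one {c : ℝ} (hc : c ≠ 1) : c * exp (1 - c) < 1 := by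
  have h : c < exp (c - 1) := by linarith [add_one_lt_exp (sub_ne_zero.mpr hc)]
  calc c * exp (1 - c) < exp (c - 1) * exp (1 - c) := by gcongr
    _ = 1 := by rw [← exp_add]; simp

lemma S_le (M : ℕ) {R lam : ℝ} (hR : 0 ≤ R) (hlam : 0 ≤ lam) : S M R lam ≤ R * M := by
  have h := mul_sum_range_pow_div_factorial_le_mul_exp M hlam
  calc S M R lam = R * (lam * ∑ k ∈ range M, lam ^ k / k !) * exp (-lam) := by
        rw [S_eq_mul_sum_mul_exp]; ring
    _ ≤ R * (M * exp lam) * exp (-lam) := by gcongr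
    _ = R * M := by rw [mul_assoc, mul_assoc, ← exp_add]; simp

lemma mul_one_sub_pow_le_S (M : ℕ) {R c : ℝ} (hR : 0 ≤ R) (hc0 : 0 < c) (hc1 : c ≤ 1) :
    R * (c * M) * (1 - (c * exp (1 - c)) ^ M) ≤ S M R (c * M) := by
  have hchernoff := pow_mul_exp_sub_sum_range_le M (x := c * M) (t := c⁻¹) (by positivity)
    (one_le_inv₀ hc0 |>.mpr hc1)
  set s := ∑ k ∈ range M, (c * M) ^ k / (k ! : ℝ)
  have htail : exp (c * M) - s ≤ c ^ M * exp M :=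
    calc exp (c * M) - s = c ^ M * (c⁻¹ ^ M * (exp (c * M) - s)) := by
          rw [← mul_assoc, ← mul_pow, mul_inv_cancel₀ hc0.ne', one_pow, one_mul]
      _ ≤ c ^ M * exp M := by
          rw [mul_right_comm, mul_inv_cancel₀ hc0.ne', one_mul] at hchernoff
          gcongr
  have hpow : (c * exp (1 - c)) ^ M = (c ^ M * exp M) * exp (-(c * M)) := by
    rw [mul_pow, ← exp_nat_mul, mul_assoc, ← exp_add]
    ring_nf
  have hprob : 1 - (c * exp (1 - c)) ^ M ≤ s * exp (-(c * M)) :=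
    calc 1 - (c * exp (1 - c)) ^ M = (exp (c * M) - c ^ M * exp M) * exp (-(c * M)) := by
          rw [hpow, sub_mul, ← exp_add, add_neg_cancel, exp_zero]
      _ ≤ s * exp (-(c * M)) := by gcongr; linarith
  rw [S_eq_mul_sum_mul_exp, mul_assoc _ s]
  gcongr

lemma Sstar_le (M : ℕ) {R : ℝ} (hR : 0 ≤ R) : Sstar M R ≤ R * M :=
  Real.sSup_le (by rintro _ ⟨lam, hlam, rfl⟩; exact S_le M hR (le_of_lt hlam)) (by positivity)

lemma S_le_Sstar (M : ℕ) {R lam : ℝ} (hR : 0 ≤ R) (hlam : 0 < lam) : S M R lam ≤ Sstar M R :=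
  le_csSup ⟨R * M, by rintro _ ⟨l, hl, rfl⟩; exact S_le M hR (le_of_lt hl)⟩ ⟨lam, hlam, rfl⟩

lemma mul_one_sub_pow_le_Sstar_div {R : ℝ} (hR : 0 < R) {c : ℝ} (hc0 : 0 < c) (hc1 : c ≤ 1)
    {M : ℕ} (hM : 1 ≤ M) : c * (1 - (c * exp (1 - c)) ^ M) ≤ Sstar M R / (M * R) := by
  have hM0 : (0 : ℝ) < M := by exact_mod_cast hM
  rw [le_div_iff₀ (by positivity)]
  calc c * (1 - (c * exp (1 - c)) ^ M) * (M * R) = R * (c * M) * (1 - (c * exp (1 - c)) ^ M) := by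
        ring
    _ ≤ S M R (c * M) := mul_one_sub_pow_le_S M hR.le hc0 hc1
    _ ≤ Sstar M R := S_le_Sstar M hR.le (by positivity)

/-- Theorem 2, asymptotic channel-access efficiency:
`S*(M)/(M·R) → 1` as `M → ∞`. -/
theorem stmt12 (R : ℝ) (hR : 0 < R) :
    Filter.Tendsto (fun M : ℕ => Sstar M R / ((M : ℝ) * R)) Filter.atTop (nhds 1) := by
  refine tendsto_order.2 ⟨fun a ha => ?_, fun a ha => Eventually.of_forall fun M => ?_⟩
  · obtain ⟨c, hac, hc0, hc1⟩ : ∃ c, a < c ∧ 0 < c ∧ c < 1 :=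
      ⟨(max a 0 + 1) / 2, by linarith [le_max_left a 0], by positivity,
        by linarith [max_lt ha one_pos]⟩
    have hq : Tendsto (fun M : ℕ => c * (1 - (c * exp (1 - c)) ^ M)) atTop (nhds c) := by
      simpa using ((tendsto_pow_atTop_nhds_zero_of_lt_one (by positivity)
        (mul_exp_one_sub_lt_one hc1.ne)).const_sub 1).const_mul c
    filter_upwards [hq.eventually_const_lt hac, eventually_ge_atTop 1] with M hlt hM
    exact hlt.trans_le (mul_one_sub_pow_le_Sstar_div hR hc0 hc1.le hM)
  · refine (div_le_one_of_le₀ ?_ (by positivity)).trans_lt ha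
    linarith [Sstar_le M hR.le]
end

section
/- (Recursion (A1)) For all integers 1 ≤ M ≤ N, every real R > 0, and every real p with 0 ≤ p < 1: S_N(M,p) = R·(N·p/(1−p))·Σ_{k=0}^{M−1} C(N,k) p^k (1−p)^{N−k} − (p/(1−p))·S_N(M−1,p), where S_N(0,p) = 0. -/
/-!
Successive binomial weights `b_k = C(N,k) p^k (1-p)^(N-k)` satisfy
`(k+1) b_{k+1} = p/(1-p) · (N-k) b_k`. Writing `S_N(M,p) = R ∑_{k<M} (k+1) b_{k+1}` and summing
this relation over `k < M`, the `N`-part gives the first term of the recursion and the `k`-part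
reassembles `R ∑_{k<M} k b_k = S_N(M-1,p)`.
-/

open Finset Real

/-- Finite-population throughput of slotted ALOHA with `N` stations, MPR
capability `M`, per-station rate `R` and transmission probability `p`:
`S_N(M,p) = R · ∑_{k=1}^{M} k · C(N,k) · p^k (1−p)^{N−k}` (so `S_N(0,p) = 0`). -/
noncomputable def SN (N M : ℕ) (R p : ℝ) : ℝ :=
  R * ∑ k ∈ Finset.Icc 1 M, (k : ℝ) * (N.choose k : ℝ) * p ^ k * (1 - p) ^ (N - k)

def binomTerm {K : Type*} [CommRing K] (N : ℕ) (p : K) (k : ℕ) : K :=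
  N.choose k * p ^ k * (1 - p) ^ (N - k)

theorem Nat.cast_choose_succ_right_eq {K : Type*} [CommRing K] (N k : ℕ) :
    (N.choose (k + 1) : K) * (k + 1) = N.choose k * (N - k) := by
  rcases le_or_gt k N with hk | hk
  · have h := congrArg (Nat.cast : ℕ → K) (Nat.choose_succ_right_eq N k)
    push_cast [Nat.cast_sub hk] at h
    exact h
  · simp [Nat.choose_eq_zero_of_lt hk, Nat.choose_eq_zero_of_lt (hk.trans k.lt_succ_self)]

theorem succ_mul_binomTerm_succ {K : Type*} [Field K] (N k : ℕ) {p : K} (hp : p ≠ 1) :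
    (k + 1) * binomTerm N p (k + 1) = p / (1 - p) * ((N - k) * binomTerm N p k) := by
  have hchoose := Nat.cast_choose_succ_right_eq (K := K) N k
  rw [div_mul_eq_mul_div, eq_div_iff (sub_ne_zero.mpr hp.symm)]
  unfold binomTerm
  rcases lt_or_ge k N with hk | hk
  · have hpow : (1 - p) ^ (N - k) = (1 - p) ^ (N - (k + 1)) * (1 - p) := by
      rw [← pow_succ]; congr 1; omega
    rw [hpow]
    linear_combination p ^ (k + 1) * (1 - p) ^ (N - (k + 1)) * (1 - p) * hchoose
  · have hzero : (N.choose (k + 1) : K) = 0 := by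
      rw [Nat.choose_eq_zero_of_lt (Nat.lt_succ_of_le hk), Nat.cast_zero]
    rw [hzero, zero_mul] at hchoose
    rw [hzero]
    linear_combination p * p ^ k * (1 - p) ^ (N - k) * hchoose

theorem SN_eq_mul_sum_Icc (N M : ℕ) (R p : ℝ) :
    SN N M R p = R * ∑ k ∈ Icc 1 M, (k : ℝ) * binomTerm N p k := by
  simp only [SN, binomTerm, mul_assoc]

theorem SN_eq_mul_sum_range_succ (N M : ℕ) (R p : ℝ) :
    SN N M R p = R * ∑ k ∈ range M, ((k : ℝ) + 1) * binomTerm N p (k + 1) := by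
  rw [SN_eq_mul_sum_Icc, ← Ico_add_one_right_eq_Icc, sum_Ico_eq_sum_range]
  simp [add_comm]

theorem SN_sub_one_eq_mul_sum_range (N M : ℕ) (R p : ℝ) :
    SN N (M - 1) R p = R * ∑ k ∈ range M, (k : ℝ) * binomTerm N p k := by
  rcases M with _ | M
  · simp [SN]
  · rw [sum_range_succ', SN_eq_mul_sum_range_succ]
    simp

theorem stmt13_general (N M : ℕ) (R : ℝ)
    (p : ℝ) (hp1 : p < 1) :
    SN N M R p =
      R * ((N : ℝ) * p / (1 - p)) *
        (∑ k ∈ Finset.range M, (N.choose k : ℝ) * p ^ k * (1 - p) ^ (N - k)) -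
      p / (1 - p) * SN N (M - 1) R p := by
  rw [SN_eq_mul_sum_range_succ, SN_sub_one_eq_mul_sum_range]
  simp only [succ_mul_binomTerm_succ N _ hp1.ne]
  simp only [binomTerm, mul_sum, ← sum_sub_distrib]
  exact sum_congr rfl fun k _ => by ring

/-- Recursion (A1): for `1 ≤ M ≤ N`, `R > 0` and `0 ≤ p < 1`,
`S_N(M,p) = R·(Np/(1−p))·∑_{k=0}^{M−1} C(N,k) p^k (1−p)^{N−k} − (p/(1−p))·S_N(M−1,p)`. -/
theorem stmt13 (N M : ℕ) (hM : 1 ≤ M) (hMN : M ≤ N) (R : ℝ) (hR : 0 < R)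
    (p : ℝ) (hp0 : 0 ≤ p) (hp1 : p < 1) :
    SN N M R p =
      R * ((N : ℝ) * p / (1 - p)) *
        (∑ k ∈ Finset.range M, (N.choose k : ℝ) * p ^ k * (1 - p) ^ (N - k)) -
      p / (1 - p) * SN N (M - 1) R p :=
  stmt13_general N M R p hp1
end

section
/- (First-order condition (A6)) Fix integers 1 ≤ M < N and a real R > 0. If p* ∈ (0,1) maximizes S_N(M,·) over [0,1], then S_N(M,p*) = R·M·(M+1)·C(N,M+1)·(p*)^{M+1}(1−p*)^{N−M−1}; that is, S_N(M,p*) equals R·M·(M+1)·Pr{X = M+1} for X binomial with parameters N and p*. -/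
open Finset Real

/-!
Write `B_k(p) = C(N,k) p^k (1-p)^(N-k)`. Since `(N-k) C(N,k) = (k+1) C(N,k+1)`, the Euler-type
identity `p B_k' = k B_k - (k+1) B_(k+1)` holds for every `k`, and summing it against the weights
`k` telescopes (Abel summation) to `p S' = S - R M (M+1) B_(M+1)` on all of `ℝ`. At an interior
maximiser `S' = 0`.
-/

theorem Finset.sum_Icc_natCast_mul_sub_succ {A : Type*} [CommRing A] (f : ℕ → A) (M : ℕ) :
    ∑ k ∈ Icc 1 M, (k : A) * (f k - f (k + 1)) = ∑ k ∈ Icc 1 M, f k - M * f (M + 1) := by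
  induction M with
  | zero => simp
  | succ M ih =>
    rw [sum_Icc_succ_top (Nat.le_add_left 1 M), sum_Icc_succ_top (Nat.le_add_left 1 M), ih]
    push_cast
    ring

noncomputable def binomialWeight (n k : ℕ) (p : ℝ) : ℝ :=
  n.choose k * p ^ k * (1 - p) ^ (n - k)

theorem SN_eq_sum_binomialWeight (N M : ℕ) (R p : ℝ) :
    SN N M R p = R * ∑ k ∈ Icc 1 M, (k : ℝ) * binomialWeight N k p := by
  simp only [SN, binomialWeight, mul_assoc]

theorem hasDerivAt_binomialWeight (n k : ℕ) (p : ℝ) :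
    HasDerivAt (binomialWeight n k)
      (n.choose k * (k * p ^ (k - 1) * (1 - p) ^ (n - k)
        - ((n - k : ℕ) : ℝ) * p ^ k * (1 - p) ^ (n - k - 1))) p := by
  have hsub : HasDerivAt (fun q : ℝ => 1 - q) (-1) p := (hasDerivAt_id' p).const_sub 1
  rw [show binomialWeight n k = fun q => (n.choose k : ℝ) * (q ^ k * (1 - q) ^ (n - k)) from
    funext fun q => mul_assoc _ _ _]
  exact (((hasDerivAt_pow k p).fun_mul (hsub.fun_pow (n - k))).const_mul _).congr_deriv (by ring)

theorem mul_deriv_binomialWeight (n k : ℕ) (p : ℝ) :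
    p * deriv (binomialWeight n k) p
      = k * binomialWeight n k p - ((k + 1 : ℕ) : ℝ) * binomialWeight n (k + 1) p := by
  have hchoose : ((k + 1 : ℕ) : ℝ) * n.choose (k + 1) = ((n - k : ℕ) : ℝ) * n.choose k := by
    exact_mod_cast (mul_comm _ _).trans ((Nat.choose_succ_right_eq n k).trans (mul_comm _ _))
  have hpow : p * (k * p ^ (k - 1)) = k * p ^ k := by
    rcases k with _ | j
    · simp
    · simp only [Nat.add_sub_cancel, pow_succ]
      ring
  rw [(hasDerivAt_binomialWeight n k p).deriv]
  simp only [binomialWeight, Nat.sub_sub]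
  linear_combination (1 - p) ^ (n - k) * n.choose k * hpow
    + p ^ (k + 1) * (1 - p) ^ (n - (k + 1)) * hchoose

theorem mul_deriv_SN (N M : ℕ) (R p : ℝ) :
    p * deriv (SN N M R) p = SN N M R p - R * M * ((M + 1 : ℕ) * binomialWeight N (M + 1) p) := by
  have hSN : SN N M R = fun q => R * ∑ k ∈ Icc 1 M, (k : ℝ) * binomialWeight N k q :=
    funext (SN_eq_sum_binomialWeight N M R)
  have hd := (HasDerivAt.fun_sum (u := Icc 1 M) fun k _ =>
    (hasDerivAt_binomialWeight N k p).differentiableAt.hasDerivAt.const_mul (k : ℝ)).const_mul R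
  rw [← hSN] at hd
  rw [hd.deriv, mul_left_comm, mul_sum,
    sum_congr rfl fun k _ => by rw [mul_left_comm, mul_deriv_binomialWeight],
    sum_Icc_natCast_mul_sub_succ (fun k => (k : ℝ) * binomialWeight N k p),
    SN_eq_sum_binomialWeight]
  ring

theorem stmt15_general (N M : ℕ) (R : ℝ)
    (pStar : ℝ) (hp0 : 0 < pStar) (hp1 : pStar < 1)
    (hmax : ∀ p : ℝ, 0 ≤ p → p ≤ 1 → SN N M R p ≤ SN N M R pStar) :
    SN N M R pStar =
      R * (M : ℝ) * ((M : ℝ) + 1) * (N.choose (M + 1) : ℝ) * pStar ^ (M + 1) *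
        (1 - pStar) ^ (N - M - 1) := by
  have hloc : IsLocalMax (SN N M R) pStar :=
    Filter.eventually_of_mem (Ioo_mem_nhds hp0 hp1) fun p hp => hmax p hp.1.le hp.2.le
  have h := mul_deriv_SN N M R pStar
  rw [hloc.deriv_eq_zero, mul_zero, binomialWeight, ← Nat.sub_sub] at h
  push_cast at h
  linear_combination -h

/-- First-order condition (A6): for `1 ≤ M < N`, `R > 0`, if
`p* ∈ (0,1)` maximizes `S_N(M,·)` over `[0,1]`, then
`S_N(M,p*) = R·M·(M+1)·C(N,M+1)·(p*)^{M+1}(1−p*)^{N−M−1}`. -/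
theorem stmt15 (N M : ℕ) (hM : 1 ≤ M) (hMN : M < N) (R : ℝ) (hR : 0 < R)
    (pStar : ℝ) (hp0 : 0 < pStar) (hp1 : pStar < 1)
    (hmax : ∀ p : ℝ, 0 ≤ p → p ≤ 1 → SN N M R p ≤ SN N M R pStar) :
    SN N M R pStar =
      R * (M : ℝ) * ((M : ℝ) + 1) * (N.choose (M + 1) : ℝ) * pStar ^ (M + 1) *
        (1 - pStar) ^ (N - M - 1) :=
  stmt15_general N M R pStar hp0 hp1 hmax
end
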